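/- arXiv:1407.1960 — 7 statements merged into one kernel-verified Lean document; each statement's English description precedes it below -/
import Mathlib

section
/- For a positive integer m, an integer r with 0 ≤ r ≤ m, an integer s ≥ 0 with r + s ≤ m, and commuting indeterminates q, z_1, ..., z_m, one has ∑_{1≤b_1<⋯<b_{r+s}≤m} q^{b_1+⋯+b_{r+s}} e_s(z_{b_1}, q z_{b_2}, ..., q^{r+s-1} z_{b_{r+s}}) = q^{s(s-1)/2} e_r(q^{s+1}, q^{s+2}, ..., q^m) e_s(q z_1, q^2 z_2, ..., q^m z_m), where e_s denotes the elementary symmetric polynomial of degree s. -/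
/-!
Expanding `e_s` over the increasing enumeration `b_0 < ⋯ < b_{n-1}` of `B`, the variable
`q^i z_{b_i}` carries as power of `q` the rank `i` of `b_i` in `B`. The left side thus becomes a
sum over pairs `T ⊆ B` with `#T = s`, or equivalently over disjoint `T, T'` with `#T' = r`. The
power of `q` then splits into `s(s-1)/2` (ranks of `T` in itself), `∑ T`, and
`∑_{a ∈ T'} (a + #{t ∈ T | a < t})`. Finally `a ↦ a + #{t ∈ T | a < t} = s + 1 + rank of a in
[1, m] \ T` is the increasing bijection `[1, m] \ T → [s + 1, m]`, so the sum over `T'` is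
`e_r(q^{s+1}, …, q^m)` whatever `T` is.
-/

/-- elementary symmetric polynomial of degree `s` in the variables `w 0, ..., w (n-1)` -/
noncomputable def esymP {R : Type*} [CommRing R] (s n : ℕ) (w : ℕ → R) : R :=
  ∑ t ∈ (Finset.range n).powersetCard s, ∏ i ∈ t, w i

open Finset

namespace Finset

theorem sum_powersetCard_map {α β M : Type*} [AddCommMonoid M] (f : α ↪ β) (A : Finset α)
    (r : ℕ) (g : Finset β → M) :
    ∑ C ∈ (A.map f).powersetCard r, g C = ∑ T ∈ A.powersetCard r, g (T.map f) := by
  rw [powersetCard_map, sum_map]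
  rfl

theorem sum_powersetCard_sum_powersetCard {α M : Type*} [DecidableEq α] [AddCommMonoid M]
    (A : Finset α) (r s : ℕ) (f : Finset α → Finset α → M) :
    ∑ B ∈ A.powersetCard (r + s), ∑ T ∈ B.powersetCard s, f B T =
      ∑ T ∈ A.powersetCard s, ∑ T' ∈ (A \ T).powersetCard r, f (T ∪ T') T := by
  rw [sum_sigma', sum_sigma']
  refine sum_nbij' (fun p => ⟨p.2, p.1 \ p.2⟩) (fun p => ⟨p.1 ∪ p.2, p.1⟩) ?_ ?_ ?_ ?_ ?_
  · rintro ⟨B, T⟩ hp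
    simp only [mem_sigma, mem_powersetCard] at hp ⊢
    obtain ⟨⟨hBA, hBc⟩, hTB, hTc⟩ := hp
    refine ⟨⟨hTB.trans hBA, hTc⟩, sdiff_subset_sdiff hBA le_rfl, ?_⟩
    rw [card_sdiff_of_subset hTB, hBc, hTc, Nat.add_sub_cancel]
  · rintro ⟨T, T'⟩ hp
    simp only [mem_sigma, mem_powersetCard] at hp ⊢
    obtain ⟨⟨hTA, hTc⟩, hT'A, hT'c⟩ := hp
    have hdisj : Disjoint T T' := disjoint_of_subset_right hT'A disjoint_sdiff
    refine ⟨⟨union_subset hTA (hT'A.trans sdiff_subset), ?_⟩, subset_union_left, hTc⟩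
    rw [card_union_of_disjoint hdisj, hTc, hT'c, add_comm]
  · rintro ⟨B, T⟩ hp
    simp only [mem_sigma, mem_powersetCard] at hp
    simp [union_sdiff_of_subset hp.2.1]
  · rintro ⟨T, T'⟩ hp
    simp only [mem_sigma, mem_powersetCard] at hp
    simp [union_sdiff_cancel_left (disjoint_of_subset_right hp.2.1 disjoint_sdiff)]
  · rintro ⟨B, T⟩ hp
    simp only [mem_sigma, mem_powersetCard] at hp
    simp [union_sdiff_of_subset hp.2.1]

section Rank

variable {α : Type*} [LinearOrder α]

def rank (B : Finset α) (x : α) : ℕ := #{b ∈ B | b < x}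

theorem rank_orderEmbOfFin (B : Finset α) {n : ℕ} (h : #B = n) (i : Fin n) :
    B.rank (B.orderEmbOfFin h i) = i := by
  have hfilter :
      {b ∈ B | b < B.orderEmbOfFin h i} = (Iio i).map (B.orderEmbOfFin h).toEmbedding := by
    have hB := B.map_orderEmbOfFin_univ h
    generalize B.orderEmbOfFin h = e at hB ⊢
    subst hB
    rw [filter_map]
    congr 1
    ext j
    simp
  rw [rank, hfilter, card_map, Fin.card_Iio]

theorem sum_powersetCard_eq_sum_powersetCard_univ {M : Type*} [AddCommMonoid M] (B : Finset α)
    {n : ℕ} (h : #B = n) (r : ℕ) (g : Finset α → M) :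
    ∑ T ∈ B.powersetCard r, g T =
      ∑ U ∈ (univ : Finset (Fin n)).powersetCard r, g (U.map (B.orderEmbOfFin h).toEmbedding) := by
  rw [← sum_powersetCard_map, map_orderEmbOfFin_univ]

theorem sum_powersetCard_sum_rank {M : Type*} [AddCommMonoid M] (P : Finset α) {n : ℕ}
    (h : #P = n) (r : ℕ) (f : ℕ → ℕ) (g : ℕ → M) :
    ∑ X ∈ P.powersetCard r, g (∑ x ∈ X, f (P.rank x)) =
      ∑ U ∈ (univ : Finset (Fin n)).powersetCard r, g (∑ i ∈ U, f i) := by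
  rw [sum_powersetCard_eq_sum_powersetCard_univ P h]
  simp only [sum_map, RelEmbedding.coe_toEmbedding, rank_orderEmbOfFin]

theorem sum_rank_self (T : Finset α) : ∑ t ∈ T, T.rank t = #T * (#T - 1) / 2 := by
  have h := sum_map univ (T.orderEmbOfFin rfl).toEmbedding T.rank
  rw [map_orderEmbOfFin_univ] at h
  simp only [h, RelEmbedding.coe_toEmbedding, rank_orderEmbOfFin]
  rw [Fin.sum_univ_eq_sum_range (fun i => i), sum_range_id]

theorem rank_union_of_disjoint {T T' : Finset α} (h : Disjoint T T') (x : α) :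
    (T ∪ T').rank x = T.rank x + T'.rank x := by
  rw [rank, filter_union, card_union_of_disjoint (disjoint_filter_filter h)]; rfl

theorem sum_rank_eq_sum_card_filter_lt (T T' : Finset α) :
    ∑ t ∈ T, T'.rank t = ∑ t' ∈ T', #{t ∈ T | t' < t} := by
  simp only [rank, card_filter]
  exact sum_comm

theorem card_eq_rank_add_card_filter_gt {T : Finset α} {a : α} (ha : a ∉ T) :
    #T = T.rank a + #{t ∈ T | a < t} := by
  have hgt : {t ∈ T | a < t} = {t ∈ T | ¬t < a} := filter_congr fun t ht =>
    ⟨not_lt_of_gt, fun h => lt_of_le_of_ne (not_lt.mp h) (ne_of_mem_of_not_mem ht ha).symm⟩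
  rw [rank, hgt, card_filter_add_card_filter_not]

end Rank

theorem rank_Icc {a b c : ℕ} (hc : c ∈ Icc a b) : (Icc a b).rank c = c - a := by
  rw [mem_Icc] at hc
  have : {x ∈ Icc a b | x < c} = Ico a c := by ext; simp; omega
  rw [rank, this, Nat.card_Ico]

end Finset

theorem sort_getD_eq_orderEmbOfFin (B : Finset ℕ) {n : ℕ} (h : #B = n) (i : Fin n) :
    (B.sort (· ≤ ·)).getD i 0 = B.orderEmbOfFin h i := by
  rw [orderEmbOfFin_apply, List.getD_eq_getElem _ _ (by simp [h])]
  rfl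

theorem esymP_sort_eq_sum_rank {R : Type*} [CommRing R] (B : Finset ℕ) {n : ℕ} (h : #B = n)
    (s : ℕ) (F : ℕ → ℕ → R) :
    esymP s n (fun i => F i ((B.sort (· ≤ ·)).getD i 0)) =
      ∑ T ∈ B.powersetCard s, ∏ t ∈ T, F (B.rank t) t := by
  rw [esymP, ← Nat.Iio_eq_range, ← Fin.map_valEmbedding_univ, sum_powersetCard_map,
    sum_powersetCard_eq_sum_powersetCard_univ B h]
  simp only [prod_map, Fin.valEmbedding_apply, RelEmbedding.coe_toEmbedding, rank_orderEmbOfFin,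
    sort_getD_eq_orderEmbOfFin B h]

theorem add_card_filter_gt_eq_rank_sdiff {m : ℕ} {T : Finset ℕ} (hT : T ⊆ Icc 1 m) {a : ℕ}
    (ha : a ∈ Icc 1 m \ T) :
    a + #{t ∈ T | a < t} = #T + 1 + (Icc 1 m \ T).rank a := by
  obtain ⟨haI, haT⟩ := mem_sdiff.mp ha
  have hT_split := card_eq_rank_add_card_filter_gt haT
  have hI_split : (Icc 1 m).rank a = T.rank a + (Icc 1 m \ T).rank a := by
    rw [← rank_union_of_disjoint disjoint_sdiff, union_sdiff_of_subset hT]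
  rw [rank_Icc haI] at hI_split
  have : 1 ≤ a := (mem_Icc.mp haI).1
  omega

theorem sum_powersetCard_sdiff_pow_sum_shift {R : Type*} [CommRing R] (q : R) {m s : ℕ}
    {T : Finset ℕ} (hT : T ⊆ Icc 1 m) (hTs : #T = s) (r : ℕ) :
    ∑ T' ∈ (Icc 1 m \ T).powersetCard r, q ^ ∑ a ∈ T', (a + #{t ∈ T | a < t}) =
      ∑ C ∈ (Icc (s + 1) m).powersetCard r, q ^ ∑ c ∈ C, c := by
  have hcompl : #(Icc 1 m \ T) = m - s := by
    rw [card_sdiff_of_subset hT, Nat.card_Icc, hTs, Nat.add_sub_cancel]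
  have hIcc : #(Icc (s + 1) m) = m - s := by
    rw [Nat.card_Icc]; omega
  calc ∑ T' ∈ (Icc 1 m \ T).powersetCard r, q ^ ∑ a ∈ T', (a + #{t ∈ T | a < t})
      = ∑ T' ∈ (Icc 1 m \ T).powersetCard r, q ^ ∑ a ∈ T', (s + 1 + (Icc 1 m \ T).rank a) := by
        refine sum_congr rfl fun T' hT' => congrArg (q ^ ·) (sum_congr rfl fun a ha => ?_)
        rw [← hTs, add_card_filter_gt_eq_rank_sdiff hT ((mem_powersetCard.mp hT').1 ha)]
    _ = ∑ C ∈ (Icc (s + 1) m).powersetCard r,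
          q ^ ∑ c ∈ C, (s + 1 + (Icc (s + 1) m).rank c) := by
        rw [sum_powersetCard_sum_rank _ hcompl, sum_powersetCard_sum_rank _ hIcc]
    _ = ∑ C ∈ (Icc (s + 1) m).powersetCard r, q ^ ∑ c ∈ C, c := by
        refine sum_congr rfl fun C hC => congrArg (q ^ ·) (sum_congr rfl fun c hc => ?_)
        have hc' := (mem_powersetCard.mp hC).1 hc
        rw [rank_Icc hc']
        have := (mem_Icc.mp hc').1
        omega

theorem sum_add_sum_rank_union {T T' : Finset ℕ} (h : Disjoint T T') :
    ∑ b ∈ T ∪ T', b + ∑ t ∈ T, (T ∪ T').rank t =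
      #T * (#T - 1) / 2 + ∑ a ∈ T', (a + #{t ∈ T | a < t}) + ∑ t ∈ T, t := by
  rw [sum_union h, sum_congr rfl fun t _ => rank_union_of_disjoint h t, sum_add_distrib,
    sum_rank_self, sum_rank_eq_sum_card_filter_lt, sum_add_distrib]
  ring

theorem pow_sum_mul_prod_rank_union {R : Type*} [CommRing R] (q : R) (z : ℕ → R)
    {T T' : Finset ℕ} (h : Disjoint T T') :
    q ^ (∑ b ∈ T ∪ T', b) * ∏ t ∈ T, q ^ (T ∪ T').rank t * z t =
      q ^ (#T * (#T - 1) / 2) * q ^ (∑ a ∈ T', (a + #{t ∈ T | a < t})) *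
        ∏ t ∈ T, q ^ t * z t := by
  simp only [prod_mul_distrib, prod_pow_eq_pow_sum]
  rw [← mul_assoc, ← pow_add, sum_add_sum_rank_union h, pow_add, pow_add,
    prod_pow_eq_pow_sum T (fun t => t) q]
  ring

theorem stmt0_general {R : Type*} [CommRing R] (q : R) (z : ℕ → R) (m r s : ℕ) :
    ∑ B ∈ (Finset.Icc 1 m).powersetCard (r + s),
      q ^ (∑ b ∈ B, b) *
        esymP s (r + s) (fun i => q ^ i * z ((B.sort (· ≤ ·)).getD i 0)) =
    q ^ (s * (s - 1) / 2) *
      (∑ T ∈ (Finset.Icc (s + 1) m).powersetCard r, ∏ i ∈ T, q ^ i) *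
      (∑ T ∈ (Finset.Icc 1 m).powersetCard s, ∏ i ∈ T, q ^ i * z i) := by
  calc _ = ∑ B ∈ (Icc 1 m).powersetCard (r + s), ∑ T ∈ B.powersetCard s,
          q ^ (∑ b ∈ B, b) * ∏ t ∈ T, q ^ B.rank t * z t := by
        refine sum_congr rfl fun B hB => ?_
        rw [esymP_sort_eq_sum_rank B (mem_powersetCard.mp hB).2 s (fun i b => q ^ i * z b),
          mul_sum]
    _ = ∑ T ∈ (Icc 1 m).powersetCard s, ∑ T' ∈ (Icc 1 m \ T).powersetCard r,
          q ^ (∑ b ∈ T ∪ T', b) * ∏ t ∈ T, q ^ (T ∪ T').rank t * z t :=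
        sum_powersetCard_sum_powersetCard _ r s _
    _ = ∑ T ∈ (Icc 1 m).powersetCard s, q ^ (s * (s - 1) / 2) *
          (∑ C ∈ (Icc (s + 1) m).powersetCard r, q ^ ∑ c ∈ C, c) * ∏ t ∈ T, q ^ t * z t := by
        refine sum_congr rfl fun T hT => ?_
        obtain ⟨hTA, hTs⟩ := mem_powersetCard.mp hT
        rw [← sum_powersetCard_sdiff_pow_sum_shift q hTA hTs, mul_sum, sum_mul]
        refine sum_congr rfl fun T' hT' => ?_
        rw [pow_sum_mul_prod_rank_union q z
          (disjoint_of_subset_right (mem_powersetCard.mp hT').1 disjoint_sdiff), hTs]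
    _ = _ := by
        rw [← mul_sum]
        congr 2
        exact sum_congr rfl fun C _ => (prod_pow_eq_pow_sum C _ q).symm

/-- for 0 ≤ r, 0 ≤ s, r + s ≤ m, m ≥ 1,
∑_{1≤b_1<⋯<b_{r+s}≤m} q^{b_1+⋯+b_{r+s}} e_s(z_{b_1}, q z_{b_2}, ..., q^{r+s-1} z_{b_{r+s}})
 = q^{s(s-1)/2} e_r(q^{s+1},...,q^m) e_s(q z_1,...,q^m z_m). -/
theorem stmt0 {R : Type*} [CommRing R] (q : R) (z : ℕ → R) (m r s : ℕ)
    (hm : 0 < m) (hrs : r + s ≤ m) :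
    ∑ B ∈ (Finset.Icc 1 m).powersetCard (r + s),
      q ^ (∑ b ∈ B, b) *
        esymP s (r + s) (fun i => q ^ i * z ((B.sort (· ≤ ·)).getD i 0)) =
    q ^ (s * (s - 1) / 2) *
      (∑ T ∈ (Finset.Icc (s + 1) m).powersetCard r, ∏ i ∈ T, q ^ i) *
      (∑ T ∈ (Finset.Icc 1 m).powersetCard s, ∏ i ∈ T, q ^ i * z i) :=
  stmt0_general q z m r s
end

section
/- For a positive integer m and indeterminates x, y, q, define K_m(x,y) := ∑_{r=1}^{m} ([r-1]! ((q-1)x - y)^{r-1} q^{-mr} / ∏_{a=1}^{r}(x + [a-1]y)) · e_r(q, q^2, ..., q^m). Then K_m(x,y) = ∑_{a=0}^{m-1} 1/(x + [a]y). -/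
/-!
Induction on `m`, for arbitrary `x, y` with all `x + [n] y ≠ 0`: we show
`K_{m+1}(x, y) = 1/x + K_m(x + y, q y)`, which suffices because `x + [n+1] y = (x + y) + [n] (q y)`.
Splitting `e_{r+1}(q, …, q^{m+1}) = e_{r+1}(q, …, q^m) + q^{m+1} e_r(q, …, q^m)` and
regrouping, this reduces to a relation between the consecutive coefficients `c_r(x, y)` of `K`:
`c_r(x, y) + c_{r+1}(x, y) = q^{r+1} c_r(x + y, q y)`, whose proof rests on
`x + [r+1] y + [r+1] ((q - 1) x - y) = q^{r+1} x`.
-/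

noncomputable section

/-- the field of rational functions in the indeterminates `x, y, q` over ℚ -/
abbrev K3 : Type := FractionRing (MvPolynomial (Fin 3) ℚ)

def xv : K3 := algebraMap (MvPolynomial (Fin 3) ℚ) K3 (MvPolynomial.X 0)
def yv : K3 := algebraMap (MvPolynomial (Fin 3) ℚ) K3 (MvPolynomial.X 1)
def qv : K3 := algebraMap (MvPolynomial (Fin 3) ℚ) K3 (MvPolynomial.X 2)

/-- the q-integer [n] = (1 - q^n)/(1 - q) -/
def qint (n : ℕ) : K3 := (1 - qv ^ n) / (1 - qv)

/-- the q-factorial [k]! with [0]! = 1 -/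
def qfact (k : ℕ) : K3 := ∏ a ∈ Finset.range k, qint (a + 1)

/-- K_m(x,y) := ∑_{r=1}^{m} ([r-1]! ((q-1)x-y)^{r-1} q^{-mr} / ∏_{a=1}^{r}(x+[a-1]y))
      · e_r(q, q², ..., q^m) -/
def Kfun (m : ℕ) (x y : K3) : K3 :=
  ∑ r ∈ Finset.Icc 1 m,
    (qfact (r - 1) * ((qv - 1) * x - y) ^ (r - 1) * (qv ^ (m * r))⁻¹ /
        ∏ a ∈ Finset.Icc 1 r, (x + qint (a - 1) * y)) *
      ∑ T ∈ (Finset.Icc 1 m).powersetCard r, ∏ i ∈ T, qv ^ i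

open Finset

@[to_additive]
theorem Finset.prod_Icc_eq_prod_range_succ {M : Type*} [CommMonoid M] (f : ℕ → M) (n : ℕ) :
    ∏ i ∈ Icc 1 n, f i = ∏ i ∈ range n, f (i + 1) := by
  rw [range_eq_Ico, prod_Ico_add', ← Ico_add_one_right_eq_Icc, zero_add]

namespace Multiset

variable {R : Type*} [CommSemiring R]

theorem esymm_zero (s : Multiset R) : s.esymm 0 = 1 := by
  simp [esymm, powersetCard_zero_left]

theorem esymm_eq_zero_of_card_lt {s : Multiset R} {n : ℕ} (h : card s < n) : s.esymm n = 0 := by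
  simp [esymm, powersetCard_eq_empty n h]

theorem esymm_cons_succ (a : R) (s : Multiset R) (n : ℕ) :
    (a ::ₘ s).esymm (n + 1) = s.esymm (n + 1) + a * s.esymm n := by
  simp [esymm, powersetCard_cons, map_map, sum_map_mul_left]

end Multiset

theorem MvPolynomial.algebraMap_ne_zero_of_eval_ne_zero {σ R K : Type*} [CommRing R] [CommRing K]
    [Algebra (MvPolynomial σ R) K] [IsFractionRing (MvPolynomial σ R) K]
    {p : MvPolynomial σ R} (v : σ → R) (h : MvPolynomial.eval v p ≠ 0) :
    algebraMap (MvPolynomial σ R) K p ≠ 0 := fun hp => by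
  rw [IsFractionRing.to_map_eq_zero_iff.mp hp, map_zero] at h
  exact h rfl

theorem qv_ne_zero : qv ≠ 0 :=
  MvPolynomial.algebraMap_ne_zero_of_eval_ne_zero ![0, 0, 1] (by simp)

theorem one_sub_qv_ne_zero : 1 - qv ≠ 0 := by
  rw [qv, ← map_one (algebraMap (MvPolynomial (Fin 3) ℚ) K3), ← map_sub]
  exact MvPolynomial.algebraMap_ne_zero_of_eval_ne_zero 0 (by simp)

theorem qint_eq_geom_sum (n : ℕ) : qint n = ∑ i ∈ range n, qv ^ i := by
  rw [qint, div_eq_iff one_sub_qv_ne_zero]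
  linear_combination geom_sum_mul qv n

@[simp]
theorem qint_zero : qint 0 = 0 := by simp [qint]

theorem qint_succ (n : ℕ) : qint (n + 1) = 1 + qv * qint n := by
  rw [qint_eq_geom_sum, qint_eq_geom_sum, geom_sum_succ]
  ring

theorem qv_pow_eq_one_add (n : ℕ) : qv ^ n = 1 + (qv - 1) * qint n := by
  rw [qint_eq_geom_sum]
  linear_combination -(geom_sum_mul qv n)

theorem add_qint_succ_mul (x y : K3) (n : ℕ) :
    x + qint (n + 1) * y = (x + y) + qint n * (qv * y) := by
  rw [qint_succ]
  ring

theorem xv_add_qint_mul_yv_ne_zero (n : ℕ) : xv + qint n * yv ≠ 0 := by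
  have h : xv + qint n * yv = algebraMap (MvPolynomial (Fin 3) ℚ) K3
      (.X 0 + (∑ i ∈ range n, .X 2 ^ i) * .X 1) := by
    simp [qint_eq_geom_sum, xv, yv, qv]
  rw [h]
  exact MvPolynomial.algebraMap_ne_zero_of_eval_ne_zero ![1, 0, 0] (by simp)

/-- The multiset `{q, q², …, qᵐ}`: its elementary symmetric functions are the `e_r` of `Kfun`. -/
def qPowers (m : ℕ) : Multiset K3 := (Icc 1 m).val.map (qv ^ ·)

theorem card_qPowers (m : ℕ) : Multiset.card (qPowers m) = m := by
  simp [qPowers]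

theorem qPowers_succ (m : ℕ) : qPowers (m + 1) = qv ^ (m + 1) ::ₘ qPowers m := by
  rw [qPowers, ← insert_Icc_right_eq_Icc_add_one (by omega),
    insert_val_of_notMem (by simp), Multiset.map_cons, qPowers]

/-- The coefficient of `e_{r+1}` in `Kfun`, without its power of `q`. -/
def kCoeff (r : ℕ) (x y : K3) : K3 :=
  qfact r * ((qv - 1) * x - y) ^ r / ∏ a ∈ range (r + 1), (x + qint a * y)

theorem Kfun_eq_sum_kCoeff (m : ℕ) (x y : K3) :
    Kfun m x y =
      ∑ r ∈ range m, kCoeff r x y * (qv ^ m)⁻¹ ^ (r + 1) * (qPowers m).esymm (r + 1) := by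
  rw [Kfun, sum_Icc_eq_sum_range_succ]
  refine sum_congr rfl fun r _ => ?_
  simp only [qPowers, Finset.esymm_map_val, kCoeff, prod_Icc_eq_prod_range_succ,
    Nat.add_sub_cancel, pow_mul, inv_pow]
  ring

theorem kCoeff_zero (x y : K3) : kCoeff 0 x y = x⁻¹ := by
  simp [kCoeff, qfact]

theorem kCoeff_add_kCoeff_succ (r : ℕ) {x y : K3} (h : ∀ n, x + qint n * y ≠ 0) :
    kCoeff r x y + kCoeff (r + 1) x y = qv ^ (r + 1) * kCoeff r (x + y) (qv * y) := by
  set c := (qv - 1) * x - y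
  set P := ∏ a ∈ range (r + 1), (x + qint a * y)
  set P' := ∏ a ∈ range (r + 1), (x + qint (a + 1) * y)
  have hP : P ≠ 0 := prod_ne_zero_iff.mpr fun a _ => h a
  have hP' : P' ≠ 0 := prod_ne_zero_iff.mpr fun a _ => h (a + 1)
  set d := x + qint (r + 1) * y
  have hd : d ≠ 0 := h (r + 1)
  have hshift : kCoeff r (x + y) (qv * y) = qfact r * c ^ r / P' := by
    simp only [kCoeff, add_qint_succ_mul, P', c]
    ring_nf
  have hprod : P * d = x * P' := by
    rw [← prod_range_succ, prod_range_succ', qint_zero, zero_mul, add_zero, mul_comm]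
  have hkey : d + qint (r + 1) * c = qv ^ (r + 1) * x := by
    rw [qv_pow_eq_one_add]
    ring
  have hr : kCoeff r x y = qfact r * c ^ r / P := rfl
  have hr' : kCoeff (r + 1) x y = qfact r * qint (r + 1) * c ^ (r + 1) / (P * d) := by
    rw [kCoeff, prod_range_succ _ (r + 1), qfact, prod_range_succ, ← qfact]
  rw [hr, hr', hshift]
  field_simp
  linear_combination qfact r * c ^ r * P' * hkey - qfact r * c ^ r * qv ^ (r + 1) * hprod

theorem Kfun_succ (m : ℕ) {x y : K3} (h : ∀ n, x + qint n * y ≠ 0) :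
    Kfun (m + 1) x y = x⁻¹ + Kfun m (x + y) (qv * y) := by
  rw [Kfun_eq_sum_kCoeff, Kfun_eq_sum_kCoeff]
  set E := (qPowers m).esymm
  set t := (qv ^ (m + 1))⁻¹
  have ht : t * qv ^ (m + 1) = 1 := inv_mul_cancel₀ (pow_ne_zero _ qv_ne_zero)
  have hqt : qv * t = (qv ^ m)⁻¹ := by
    simp only [t, pow_succ, mul_inv]
    field_simp [qv_ne_zero]
  have hEtop : E (m + 1) = 0 :=
    Multiset.esymm_eq_zero_of_card_lt (by rw [card_qPowers]; omega)
  have hsplit : ∀ r, kCoeff r x y * t ^ (r + 1) * (qPowers (m + 1)).esymm (r + 1) =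
      kCoeff r x y * t ^ (r + 1) * E (r + 1) + kCoeff r x y * t ^ r * E r := fun r => by
    rw [qPowers_succ, Multiset.esymm_cons_succ]
    linear_combination kCoeff r x y * t ^ r * E r * ht
  have hpair : ∀ r, kCoeff r x y * t ^ (r + 1) * E (r + 1) +
      kCoeff (r + 1) x y * t ^ (r + 1) * E (r + 1) =
        kCoeff r (x + y) (qv * y) * (qv ^ m)⁻¹ ^ (r + 1) * E (r + 1) := fun r => by
    rw [← hqt, mul_pow]
    linear_combination t ^ (r + 1) * E (r + 1) * kCoeff_add_kCoeff_succ r h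
  have hE0 : E 0 = 1 := Multiset.esymm_zero _
  rw [sum_congr rfl fun r _ => hsplit r, sum_add_distrib,
    sum_range_succ _ m, sum_range_succ' _ m, hEtop, hE0, kCoeff_zero,
    ← sum_congr rfl fun r _ => hpair r, sum_add_distrib]
  ring

theorem Kfun_eq_sum_inv (m : ℕ) {x y : K3} (h : ∀ n, x + qint n * y ≠ 0) :
    Kfun m x y = ∑ a ∈ range m, (x + qint a * y)⁻¹ := by
  induction m generalizing x y with
  | zero => simp [Kfun]
  | succ m ih =>
    have h' : ∀ n, (x + y) + qint n * (qv * y) ≠ 0 := fun n =>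
      add_qint_succ_mul x y n ▸ h (n + 1)
    simp only [Kfun_succ m h, ih h', sum_range_succ' _ m, qint_zero, zero_mul, add_zero,
      add_qint_succ_mul, add_comm x⁻¹]

theorem stmt4_general (m : ℕ) :
    Kfun m xv yv = ∑ a ∈ Finset.range m, (xv + qint a * yv)⁻¹ :=
  Kfun_eq_sum_inv m xv_add_qint_mul_yv_ne_zero

/-- for m ≥ 1, K_m(x,y) = ∑_{a=0}^{m-1} 1/(x + [a]y). -/
theorem stmt4 (m : ℕ) (hm : 1 ≤ m) :
    Kfun m xv yv = ∑ a ∈ Finset.range m, (xv + qint a * yv)⁻¹ :=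
  stmt4_general m

end
end

section
/- Let W be the Weyl group of type A_{k−1} acting on V = ℝ^k by permuting coordinates, with positive roots α_{ij} = ε_i − ε_j for i < j. For v ∈ V let I(v) := {a ∈ R^+ : a(v) < 0} and let w_v denote the unique shortest element of W such that w_v·v lies in the closed fundamental chamber. If v, v' ∈ V satisfy I(v) ⊆ I(v'), then w_{v'} = w_{w_v·v'} · w_v and ℓ(w_{v'}) = ℓ(w_{w_v·v'}) + ℓ(w_v), where ℓ denotes the Coxeter length. -/
/-- `σ` is the unique shortest permutation moving `v` into the closed fundamental
chamber; it is characterized by `I(v) = R⁺ ∩ σ⁻¹R⁻`, i.e. for every positive root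
`α_{ij} = ε_i − ε_j` (with `i < j`): `α_{ij}(v) < 0 ↔ σ(α_{ij}) ∈ R⁻`. -/
def IsChamberPerm {k : ℕ} (σ : Equiv.Perm (Fin k)) (v : Fin k → ℝ) : Prop :=
  ∀ i j : Fin k, i < j → (v i < v j ↔ σ j < σ i)

/-- the Coxeter length of a permutation, i.e. its number of inversions -/
def permLength {k : ℕ} (σ : Equiv.Perm (Fin k)) : ℕ :=
  (Finset.univ.filter fun p : Fin k × Fin k => p.1 < p.2 ∧ σ p.2 < σ p.1).card

/-!
A permutation of `Fin k` is determined by its inversion set, and `IsChamberPerm σ v` says that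
the inversion set of `σ` is `I(v)`. Given `I(v) ⊆ I(v')`, the product `σ'' * σ` inverts exactly
the pairs in `I(v')`: a pair not inverted by `σ` is inverted by `σ'' * σ` iff `σ''` inverts its
image, which by the choice of `σ''` means it lies in `I(v')`, while a pair inverted by `σ` lies in
`I(v) ⊆ I(v')` and stays inverted. Hence `σ' = σ'' * σ`. Since every inversion of `σ` remains one
of `σ'' * σ`, the inversions of `σ'' * σ` split into those of `σ` and the `σ`-preimages of those
of `σ''`, which gives additivity of the length.
-/

theorem Equiv.Perm.eq_one_of_strictMono {α : Type*} [LinearOrder α] [WellFoundedLT α]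
    {e : Equiv.Perm α} (he : StrictMono e) : e = 1 :=
  Equiv.ext fun x =>
    DFunLike.congr_fun (Subsingleton.elim (he.orderIsoOfSurjective e e.surjective)
      (OrderIso.refl α)) x

theorem Equiv.Perm.eq_of_inversions_iff {α : Type*} [LinearOrder α] [WellFoundedLT α]
    {τ ρ : Equiv.Perm α} (h : ∀ i j, i < j → (τ j < τ i ↔ ρ j < ρ i)) : τ = ρ := by
  suffices hmono : StrictMono (τ * ρ⁻¹) from mul_inv_eq_one.mp (eq_one_of_strictMono hmono)
  intro a b hab
  obtain ⟨i, rfl⟩ := ρ.surjective a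
  obtain ⟨j, rfl⟩ := ρ.surjective b
  simp only [Equiv.Perm.mul_apply, Equiv.Perm.coe_inv, Equiv.symm_apply_apply] at hab ⊢
  rcases lt_trichotomy i j with hij | rfl | hji
  · exact lt_of_le_of_ne (not_lt.mp ((h i j hij).not.mpr hab.not_gt)) (τ.injective.ne hij.ne)
  · exact absurd hab (lt_irrefl _)
  · exact (h j i hji).mpr hab

theorem IsChamberPerm.unique {k : ℕ} {v : Fin k → ℝ} {τ ρ : Equiv.Perm (Fin k)}
    (hτ : IsChamberPerm τ v) (hρ : IsChamberPerm ρ v) : τ = ρ :=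
  Equiv.Perm.eq_of_inversions_iff fun i j hij => (hτ i j hij).symm.trans (hρ i j hij)

theorem IsChamberPerm.mul {k : ℕ} {v v' : Fin k → ℝ} {σ τ : Equiv.Perm (Fin k)}
    (hσ : IsChamberPerm σ v) (hτ : IsChamberPerm τ fun i => v' (σ⁻¹ i))
    (hI : ∀ i j : Fin k, i < j → v i < v j → v' i < v' j) :
    IsChamberPerm (τ * σ) v' := by
  intro i j hij
  simp only [Equiv.Perm.mul_apply]
  rcases lt_or_gt_of_ne (σ.injective.ne hij.ne) with hσij | hσji
  · simpa using hτ (σ i) (σ j) hσij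
  · have hv' : v' i < v' j := hI i j hij ((hσ i j hij).mpr hσji)
    have hτji := (hτ (σ j) (σ i) hσji).not
    simp only [Equiv.Perm.coe_inv, Equiv.symm_apply_apply, not_lt] at hτji
    exact iff_of_true hv'
      (lt_of_le_of_ne (hτji.mp hv'.le) (τ.injective.ne (σ.injective.ne hij.ne')))

theorem permLength_mul_of_inversions_subset {k : ℕ} {σ τ : Equiv.Perm (Fin k)}
    (h : ∀ i j, i < j → σ j < σ i → τ (σ j) < τ (σ i)) :
    permLength (τ * σ) = permLength τ + permLength σ := by
  unfold permLength
  rw [← Finset.card_filter_add_card_filter_not (fun p : Fin k × Fin k => σ p.1 < σ p.2),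
    Finset.filter_filter, Finset.filter_filter]
  congr 1
  · refine Finset.card_bij' (fun p _ => (σ p.1, σ p.2)) (fun q _ => (σ⁻¹ q.1, σ⁻¹ q.2))
      ?_ ?_ (fun p _ => by simp) (fun q _ => by simp)
    · intro p hp
      rw [Finset.mem_filter] at hp ⊢
      simp only [Finset.mem_univ, true_and, Equiv.Perm.mul_apply] at hp ⊢
      exact ⟨hp.2, hp.1.2⟩
    · intro q hq
      rw [Finset.mem_filter] at hq ⊢
      simp only [Finset.mem_univ, true_and, Equiv.Perm.mul_apply,
        Equiv.Perm.coe_inv, Equiv.apply_symm_apply] at hq ⊢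
      refine ⟨⟨?_, hq.2⟩, hq.1⟩
      by_contra hle
      have hlt := lt_of_le_of_ne (not_lt.mp hle) (σ.symm.injective.ne hq.1.ne')
      have := h _ _ hlt (by simpa using hq.1)
      simp only [Equiv.apply_symm_apply] at this
      exact this.not_gt hq.2
  · refine congrArg Finset.card (Finset.filter_congr fun p _ => ?_)
    simp only [Equiv.Perm.mul_apply]
    constructor
    · rintro ⟨⟨hp, -⟩, hσp⟩
      exact ⟨hp, lt_of_le_of_ne (not_lt.mp hσp) (σ.injective.ne hp.ne')⟩
    · rintro ⟨hp, hσp⟩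
      exact ⟨⟨hp, h _ _ hp hσp⟩, hσp.not_gt⟩

/-- Here `σ, σ', σ''` play the roles of `w_v, w_{v'}, w_{w_v·v'}`, and `W` acts by
`(w·u) i = u (w⁻¹ i)`. -/
theorem stmt13 {k : ℕ} (v v' : Fin k → ℝ) (σ σ' σ'' : Equiv.Perm (Fin k))
    (hσ : IsChamberPerm σ v) (hσ' : IsChamberPerm σ' v')
    (hσ'' : IsChamberPerm σ'' fun i => v' (σ⁻¹ i))
    (hI : ∀ i j : Fin k, i < j → v i < v j → v' i < v' j) :
    σ' = σ'' * σ ∧ permLength σ' = permLength σ'' + permLength σ := by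
  have hmul := hσ.mul hσ'' hI
  obtain rfl : σ' = σ'' * σ := hσ'.unique hmul
  refine ⟨rfl, permLength_mul_of_inversions_subset fun i j hij hσji => ?_⟩
  exact (hmul i j hij).mp (hI i j hij ((hσ i j hij).mpr hσji))
end

section
/- Let x ∈ ℤ^k and for 1 ≤ j ≤ k define d_j^+(x) := #{p : j < p ≤ k, x_j = x_p} and d_j^-(x) := #{p : 1 ≤ p < j, x_p = x_j}. Then for any q, ∑_{j=1}^{k} [d_j^+(x)] = ∑_{j=1}^{k} q^{d_j^-(x)} d_j^+(x), where [n] := 1 + q + ⋯ + q^{n-1} is the q-integer. -/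
/-- d_j^+(x) := #{p : j < p ≤ k, x_j = x_p} -/
def dplus {k : ℕ} (x : Fin k → ℤ) (j : Fin k) : ℕ :=
  (Finset.univ.filter fun p : Fin k => j < p ∧ x j = x p).card

/-- d_j^-(x) := #{p : 1 ≤ p < j, x_p = x_j} -/
def dminus {k : ℕ} (x : Fin k → ℤ) (j : Fin k) : ℕ :=
  (Finset.univ.filter fun p : Fin k => p < j ∧ x p = x j).card

/-! Only indices carrying the same value interact, so it suffices to treat one fibre of `x`,
a finite linearly ordered set `s` of size `n`. For any `f`, both `∑ j ∈ s, f #{p < j}` and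
`∑ j ∈ s, f #{p > j}` equal `∑ a < n, f a`, since ranks run through `0, …, n - 1`. The right-hand
side is a sum over pairs `j < p` weighted by `q ^ #{i < j}`; summing first over `j` for fixed `p`
gives `[#{i < p}]`, so both sides equal `∑ a < n, [a]`. -/

open Finset

namespace Finset

variable {α : Type*} [LinearOrder α]

theorem sum_apply_card_filter_lt {M : Type*} [AddCommMonoid M] (s : Finset α) (f : ℕ → M) :
    ∑ j ∈ s, f #{p ∈ s | p < j} = ∑ a ∈ range #s, f a := by
  induction s using Finset.induction_on_max with
  | empty => simp
  | insert a s ha ih =>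
    have has : a ∉ s := fun h => lt_irrefl a (ha a h)
    have below_a : #{p ∈ insert a s | p < a} = #s := by
      rw [filter_insert, if_neg (lt_irrefl a), filter_true_of_mem ha]
    have below_j : ∀ j ∈ s, {p ∈ insert a s | p < j} = {p ∈ s | p < j} := fun j hj => by
      rw [filter_insert, if_neg (ha j hj).not_gt]
    rw [sum_insert has, card_insert_of_notMem has, sum_range_succ, below_a, add_comm, ← ih,
      sum_congr rfl fun j hj => by rw [below_j j hj]]

theorem sum_apply_card_filter_gt {M : Type*} [AddCommMonoid M] (s : Finset α) (f : ℕ → M) :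
    ∑ j ∈ s, f #{p ∈ s | j < p} = ∑ a ∈ range #s, f a :=
  sum_apply_card_filter_lt (α := αᵒᵈ) s f

theorem sum_geom_sum_card_filter_gt_eq_sum_pow_mul {R : Type*} [CommSemiring R] (q : R)
    (s : Finset α) :
    ∑ j ∈ s, ∑ a ∈ range #{p ∈ s | j < p}, q ^ a =
      ∑ j ∈ s, q ^ #{p ∈ s | p < j} * (#{p ∈ s | j < p} : R) := by
  have below_of_lt : ∀ p, ∀ j ∈ {i ∈ s | i < p},
      {i ∈ s | i < j} = {i ∈ {i ∈ s | i < p} | i < j} := fun p j hj => by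
    rw [filter_filter]
    exact filter_congr fun i _ => ⟨fun hij => ⟨hij.trans (mem_filter.1 hj).2, hij⟩, And.right⟩
  calc ∑ j ∈ s, ∑ a ∈ range #{p ∈ s | j < p}, q ^ a
      = ∑ a ∈ range #s, ∑ b ∈ range a, q ^ b :=
        sum_apply_card_filter_gt s fun n => ∑ b ∈ range n, q ^ b
    _ = ∑ p ∈ s, ∑ b ∈ range #{j ∈ s | j < p}, q ^ b := (sum_apply_card_filter_lt s _).symm
    _ = ∑ p ∈ s, ∑ j ∈ {j ∈ s | j < p}, q ^ #{i ∈ s | i < j} := by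
      refine sum_congr rfl fun p _ => ?_
      rw [← sum_apply_card_filter_lt _ (q ^ ·)]
      exact sum_congr rfl fun j hj => by rw [below_of_lt p j hj]
    _ = ∑ j ∈ s, ∑ p ∈ {p ∈ s | j < p}, q ^ #{i ∈ s | i < j} :=
      sum_comm' fun p j => by simp only [mem_filter]; tauto
    _ = ∑ j ∈ s, q ^ #{p ∈ s | p < j} * (#{p ∈ s | j < p} : R) := by
      simp only [sum_const, nsmul_eq_mul, mul_comm]

end Finset

theorem dplus_eq_card_fiber {k : ℕ} {x : Fin k → ℤ} {j : Fin k} {v : ℤ} (hj : x j = v) :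
    dplus x j = #{p ∈ {i | x i = v} | j < p} := by
  rw [dplus, filter_filter, hj]
  exact congrArg card (filter_congr fun p _ => by rw [eq_comm (a := v)]; exact and_comm)

theorem dminus_eq_card_fiber {k : ℕ} {x : Fin k → ℤ} {j : Fin k} {v : ℤ} (hj : x j = v) :
    dminus x j = #{p ∈ {i | x i = v} | p < j} := by
  rw [dminus, filter_filter, hj]
  exact congrArg card (filter_congr fun p _ => and_comm)

/-- ∑_{j=1}^{k} [d_j^+(x)] = ∑_{j=1}^{k} q^{d_j^-(x)} d_j^+(x),
where [n] := 1 + q + ⋯ + q^{n-1}. -/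
theorem stmt14 {R : Type*} [CommRing R] (q : R) {k : ℕ} (x : Fin k → ℤ) :
    ∑ j : Fin k, ∑ a ∈ Finset.range (dplus x j), q ^ a =
      ∑ j : Fin k, q ^ dminus x j * (dplus x j : R) := by
  have maps_to : ∀ j ∈ univ, x j ∈ univ.image x := fun j _ => mem_image_of_mem x (mem_univ j)
  rw [← sum_fiberwise_of_maps_to maps_to, ← sum_fiberwise_of_maps_to maps_to]
  refine sum_congr rfl fun v _ => ?_
  refine (sum_congr rfl fun j hj => ?_).trans
    ((sum_geom_sum_card_filter_gt_eq_sum_pow_mul q _).trans (sum_congr rfl fun j hj => ?_))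
  · rw [dplus_eq_card_fiber (mem_filter.1 hj).2]
  · rw [dplus_eq_card_fiber (mem_filter.1 hj).2, dminus_eq_card_fiber (mem_filter.1 hj).2]
end

section
/- Fix a commutative ring R containing parameters α, β, γ, δ, and the Laurent polynomial ring P = R[e^{±v_1}, ..., e^{±v_k}]. Define operators on P acting from the right: P·X̌_i := e^{−v_i}·P, and P·Ť_i := P.s_i + ((α e^{v_i} + β)(γ e^{v_{i+1}} + δ)/(e^{v_i} − e^{v_{i+1}}))(P − P.s_i), where s_i swaps e^{v_i} and e^{v_{i+1}}. Then the operators Ť_i satisfy the quadratic relation (Ť_i − 1)(Ť_i + q) = 0 with q := 1 + βγ − αδ. -/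
noncomputable section

/-- the Laurent polynomial ring R[e^{±v_1}, ..., e^{±v_k}], realized as the group
algebra of the lattice ℤ^k over R -/
abbrev Laur (R : Type*) [CommRing R] (k : ℕ) : Type _ := AddMonoidAlgebra R (Fin k → ℤ)

/-- the monomial e^{v} for an exponent vector v ∈ ℤ^k -/
def expMono {R : Type*} [CommRing R] {k : ℕ} (v : Fin k → ℤ) : Laur R k :=
  AddMonoidAlgebra.single v 1

/-- the additive automorphism of ℤ^k exchanging the coordinates i and j -/
def swapAdd {k : ℕ} (i j : Fin k) : (Fin k → ℤ) ≃+ (Fin k → ℤ) where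
  toFun f := f ∘ Equiv.swap i j
  invFun f := f ∘ Equiv.swap i j
  left_inv f := by ext l; simp
  right_inv f := by ext l; simp
  map_add' _ _ := rfl

/-- the algebra automorphism `P ↦ P.s_i` exchanging `e^{v_i}` and `e^{v_{i+1}}` -/
def sOp (R : Type*) [CommRing R] {k : ℕ} (i j : Fin k) : Laur R k ≃ₐ[R] Laur R k :=
  AddMonoidAlgebra.domCongr R R (swapAdd i j)

/-!
Write `x = e^{v_i}`, `y = e^{v_{i+1}}`, `F = (αx + β)(γy + δ)` and `s = s_i`. Applying `s` to the
relation defining `Q = P·Ť_i` gives a second relation, for `s Q`, whose coefficient is `s F`;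
since `F - s F = (αδ - βγ)(x - y)`, the relations for `Q`, `s Q` and `Q2` combine linearly to
`(x - y)² (Q2 - (1 - q) Q - q P) = 0`. Finally `x - y` is a non-zero-divisor of the Laurent
polynomial ring: the term of `P` with the largest exponent of `e^{v_i}` survives in `(x - y) P`.
-/

namespace AddMonoidAlgebra

theorem isLeftRegular_single_sub_single {R G : Type*} [Ring R] [AddGroup G] (φ : G →+ ℤ)
    {v w : G} (hwv : φ w < φ v) : IsLeftRegular (single v (1 : R) - single w 1) := by
  rw [isLeftRegular_iff_right_eq_zero_of_mul]
  intro f hf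
  by_contra hf0
  obtain ⟨b, hb, hmax⟩ := f.coeff.support.exists_max_image φ
    (Finsupp.support_nonempty_iff.mpr (coeff_eq_zero.not.mpr hf0))
  have hout : f.coeff (-w + (v + b)) = 0 := by
    by_contra hne
    have := hmax _ (Finsupp.mem_support_iff.mpr hne)
    simp only [map_add, map_neg] at this
    omega
  have hcoeff := congrArg (fun x => x.coeff (v + b)) hf
  simp only [sub_mul, coeff_sub, Finsupp.sub_apply, coeff_single_mul_apply, neg_add_cancel_left,
    hout, one_mul, sub_zero] at hcoeff
  exact Finsupp.mem_support_iff.mp hb hcoeff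

end AddMonoidAlgebra

theorem sOp_involutive (R : Type*) [CommRing R] {k : ℕ} (i j : Fin k) :
    Function.Involutive (sOp R i j) := by
  intro P
  ext a
  simp only [sOp, AddMonoidAlgebra.coeff_domCongr]
  congr 1
  ext l
  simp [swapAdd]

theorem sOp_expMono_single (R : Type*) [CommRing R] {k : ℕ} (i j l : Fin k) :
    sOp R i j (expMono (Pi.single l 1)) = expMono (Pi.single (Equiv.swap i j l) 1) := by
  rw [sOp, expMono, expMono, AddMonoidAlgebra.domCongr_single]
  congr 1
  ext m
  simp [swapAdd, Pi.single_apply, Equiv.swap_apply_eq_iff]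

theorem hecke_quadratic_relation {R A : Type*} [CommRing R] [CommRing A] [Algebra R A]
    (σ : A →ₐ[R] A) (hσ : Function.Involutive σ) {x y : A} (hx : σ x = y) (hy : σ y = x)
    (hxy : IsLeftRegular (x - y)) (α β γ δ : R) {P Q Q2 : A}
    (hQ : (x - y) * Q = (x - y) * σ P +
      (algebraMap R A α * x + algebraMap R A β) * (algebraMap R A γ * y + algebraMap R A δ) *
        (P - σ P))
    (hQ2 : (x - y) * Q2 = (x - y) * σ Q +
      (algebraMap R A α * x + algebraMap R A β) * (algebraMap R A γ * y + algebraMap R A δ) *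
        (Q - σ Q)) :
    Q2 = (1 - algebraMap R A (1 + β * γ - α * δ)) * Q + algebraMap R A (1 + β * γ - α * δ) * P := by
  have hσQ := congrArg σ hQ
  simp only [map_mul, map_sub, map_add, hx, hy, hσ P, AlgHom.commutes] at hσQ
  set a := algebraMap R A α
  set b := algebraMap R A β
  set c := algebraMap R A γ
  set d := algebraMap R A δ
  rw [map_sub, map_add, map_one, map_mul, map_mul]
  refine hxy.mul hxy ?_
  dsimp only
  linear_combination (x - y) * hQ2 + ((a * x + b) * (c * y + d) - (a * d - b * c) * (x - y)) * hQ
    + ((a * x + b) * (c * y + d) - (x - y)) * hσQ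

/-- the operators Ť_i satisfy (Ť_i − 1)(Ť_i + q) = 0 with
q = 1 + βγ − αδ.  Since `P·Ť_i := P.s_i + ((αe^{v_i}+β)(γe^{v_{i+1}}+δ)/(e^{v_i}−e^{v_{i+1}}))(P − P.s_i)`,
the values `Q = P·Ť_i` and `Q2 = (P·Ť_i)·Ť_i` are characterized by the two
hypotheses below (multiplying the defining formula by `e^{v_i} − e^{v_{i+1}}`),
and the quadratic relation reads `Q2 = (1−q)Q + qP`. -/
theorem stmt15 {R : Type*} [CommRing R] (α β γ δ : R) {k : ℕ}
    (i j : Fin k) (hij : (j : ℕ) = (i : ℕ) + 1)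
    (P Q Q2 : Laur R k)
    (hQ : (expMono (Pi.single i 1) - expMono (Pi.single j 1)) * Q =
      (expMono (Pi.single i 1) - expMono (Pi.single j 1)) * sOp R i j P +
        (algebraMap R (Laur R k) α * expMono (Pi.single i 1) + algebraMap R (Laur R k) β) *
          (algebraMap R (Laur R k) γ * expMono (Pi.single j 1) + algebraMap R (Laur R k) δ) *
          (P - sOp R i j P))
    (hQ2 : (expMono (Pi.single i 1) - expMono (Pi.single j 1)) * Q2 =
      (expMono (Pi.single i 1) - expMono (Pi.single j 1)) * sOp R i j Q +
        (algebraMap R (Laur R k) α * expMono (Pi.single i 1) + algebraMap R (Laur R k) β) *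
          (algebraMap R (Laur R k) γ * expMono (Pi.single j 1) + algebraMap R (Laur R k) δ) *
          (Q - sOp R i j Q)) :
    Q2 = (1 - algebraMap R (Laur R k) (1 + β * γ - α * δ)) * Q +
      algebraMap R (Laur R k) (1 + β * γ - α * δ) * P := by
  have hji : j ≠ i := fun h => by rw [h] at hij; omega
  have hreg : IsLeftRegular (expMono (R := R) (Pi.single i 1) - expMono (Pi.single j 1)) :=
    AddMonoidAlgebra.isLeftRegular_single_sub_single (Pi.evalAddMonoidHom _ i) (by simp [hji])
  refine hecke_quadratic_relation (sOp R i j).toAlgHom (sOp_involutive R i j) ?_ ?_ hreg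
    α β γ δ hQ hQ2
  · simpa using sOp_expMono_single R i j i
  · simpa using sOp_expMono_single R i j j

end
end

section
/- With the divided-difference-type operators Ť_i and multiplication operators X̌_i as defined (acting on Laurent polynomials in e^{v_1},...,e^{v_k} from the right), the deformed commutation relation holds: X̌_{i+1}Ť_i − Ť_iX̌_i = (α + βX̌_i)(γ + δX̌_{i+1}), i.e., for every Laurent polynomial P, (P·X̌_{i+1})·Ť_i − (P·Ť_i)·X̌_i = ((P·(α + βX̌_i))·(γ + δX̌_{i+1})). -/
/-!
Multiply both sides by `e^{v_i} − e^{v_{i+1}}`. This is a non-zero-divisor in the Laurent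
polynomial ring over any commutative ring: a nonempty finite subset of a torsion-free group is
never invariant under a nonzero translation (summing its elements would give `card • d = 0`).
After clearing the denominator, the relation is a polynomial identity in the monomials, whose
only non-arithmetic input is `s_i(e^{−v_{i+1}} P) = e^{−v_i} s_i(P)`.
-/

noncomputable section

/-- the operator X̌_l : P ↦ e^{−v_l}·P -/
def XOp {R : Type*} [CommRing R] {k : ℕ} (l : Fin k) (P : Laur R k) : Laur R k :=
  expMono (-(Pi.single l 1)) * P

namespace AddMonoidAlgebra

variable {R G : Type*}

theorem eq_zero_of_single_one_mul_eq_self [Semiring R] [AddCancelCommMonoid G]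
    [IsAddTorsionFree G] {d : G} (hd : d ≠ 0) {f : AddMonoidAlgebra R G}
    (h : single d 1 * f = f) : f = 0 := by
  set s := f.coeff.support
  have hs : s.map (addLeftEmbedding d) = s := by
    rw [← support_coeff_single_mul f 1 (by simp) d, h]
  have hsum : s.card • d + ∑ x ∈ s, x = ∑ x ∈ s, x := by
    conv_rhs => rw [← hs, Finset.sum_map]
    simp only [addLeftEmbedding_apply]
    rw [Finset.sum_add_distrib, Finset.sum_const]
  have hcard : s.card = 0 := (nsmul_eq_zero_iff_left hd).mp (add_eq_right.mp hsum)
  rw [← coeff_eq_zero]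
  simpa [s] using hcard

theorem isLeftRegular_single_one_sub_single_one [Ring R] [AddCommGroup G] [IsAddTorsionFree G]
    {v w : G} (hvw : v ≠ w) :
    IsLeftRegular (single v 1 - single w 1 : AddMonoidAlgebra R G) := by
  refine isLeftRegular_of_non_zero_divisor _ fun f hf => ?_
  refine eq_zero_of_single_one_mul_eq_self (sub_ne_zero.mpr hvw) ?_
  have hshift :
      single (-w) 1 * ((single v 1 - single w 1) * f) = single (v - w) 1 * f - f := by
    rw [← mul_assoc, mul_sub, single_mul_single, single_mul_single, neg_add_cancel,
      neg_add_eq_sub, mul_one, ← one_def, sub_mul, one_mul]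
  rwa [hf, mul_zero, eq_comm, sub_eq_zero] at hshift

end AddMonoidAlgebra

section Laurent

variable {R : Type*} [CommRing R] {k : ℕ}

theorem isLeftRegular_expMono_sub_expMono {v w : Fin k → ℤ} (hvw : v ≠ w) :
    IsLeftRegular (expMono v - expMono w : Laur R k) :=
  AddMonoidAlgebra.isLeftRegular_single_one_sub_single_one hvw

theorem expMono_mul_expMono_neg (v : Fin k → ℤ) :
    expMono (R := R) v * expMono (-v) = 1 := by
  rw [expMono, expMono, AddMonoidAlgebra.single_mul_single, add_neg_cancel, mul_one]
  rfl

theorem swapAdd_single_right (i j : Fin k) :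
    swapAdd i j (Pi.single j (1 : ℤ)) = Pi.single i 1 := by
  change Pi.single j 1 ∘ Equiv.swap i j = _
  rw [Pi.single_comp_equiv, Equiv.symm_swap, Equiv.swap_apply_right]

theorem sOp_XOp_right (i j : Fin k) (P : Laur R k) :
    sOp R i j (XOp j P) = XOp i (sOp R i j P) := by
  rw [XOp, XOp, map_mul, sOp, expMono, AddMonoidAlgebra.domCongr_single, map_neg,
    swapAdd_single_right]
  rfl

end Laurent

/-- `TP = P·Ť_i` and `T2 = (P·X̌_{i+1})·Ť_i` are given through the defining formula of `Ť_i`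
multiplied by `e^{v_i} − e^{v_{i+1}}`. -/
theorem stmt16 {R : Type*} [CommRing R] (α β γ δ : R) {k : ℕ}
    (i j : Fin k) (hij : (j : ℕ) = (i : ℕ) + 1)
    (P TP T2 : Laur R k)
    (hTP : (expMono (Pi.single i 1) - expMono (Pi.single j 1)) * TP =
      (expMono (Pi.single i 1) - expMono (Pi.single j 1)) * sOp R i j P +
        (algebraMap R (Laur R k) α * expMono (Pi.single i 1) + algebraMap R (Laur R k) β) *
          (algebraMap R (Laur R k) γ * expMono (Pi.single j 1) + algebraMap R (Laur R k) δ) *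
          (P - sOp R i j P))
    (hT2 : (expMono (Pi.single i 1) - expMono (Pi.single j 1)) * T2 =
      (expMono (Pi.single i 1) - expMono (Pi.single j 1)) * sOp R i j (XOp j P) +
        (algebraMap R (Laur R k) α * expMono (Pi.single i 1) + algebraMap R (Laur R k) β) *
          (algebraMap R (Laur R k) γ * expMono (Pi.single j 1) + algebraMap R (Laur R k) δ) *
          (XOp j P - sOp R i j (XOp j P))) :
    T2 - XOp i TP =
      algebraMap R (Laur R k) γ *
          (algebraMap R (Laur R k) α * P + algebraMap R (Laur R k) β * XOp i P) +
        algebraMap R (Laur R k) δ *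
          XOp j (algebraMap R (Laur R k) α * P + algebraMap R (Laur R k) β * XOp i P) := by
  have hne : (Pi.single i (1 : ℤ) : Fin k → ℤ) ≠ Pi.single j 1 :=
    fun h => by simpa [Pi.single_apply, Fin.ext_iff, hij] using congrFun h i
  have hswap := sOp_XOp_right i j P
  simp only [XOp] at hT2 hswap ⊢
  set a := expMono (R := R) (Pi.single i 1)
  set b := expMono (R := R) (Pi.single j 1)
  set u := expMono (R := R) (-(Pi.single i 1))
  set w := expMono (R := R) (-(Pi.single j 1))
  set α' := algebraMap R (Laur R k) α
  set β' := algebraMap R (Laur R k) β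
  set γ' := algebraMap R (Laur R k) γ
  set δ' := algebraMap R (Laur R k) δ
  have hau : a * u = 1 := expMono_mul_expMono_neg _
  have hbw : b * w = 1 := expMono_mul_expMono_neg _
  -- since `w − u = u w (a − b)`, the difference of the two shifts factors through `a − b`
  have hfactor : (α' * a + β') * (γ' * b + δ') * (w - u) =
      (a - b) * ((α' + β' * u) * (γ' + δ' * w)) := by
    linear_combination (-(α' * γ' * b + α' * δ' + β' * γ' + β' * δ' * w)) * hau
      + (α' * γ' * a + α' * δ' + β' * γ' + β' * δ' * u) * hbw
  apply isLeftRegular_expMono_sub_expMono hne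
  linear_combination
    hT2 - u * hTP + ((a - b) - (α' * a + β') * (γ' * b + δ')) * hswap + P * hfactor

end
end

section
/- Let F be the space of functions f : ℤ^k → ℂ and define, for a_i(x) := x_i − x_{i+1} > 0, the operator (T̂_i f)(x) := αδ f(x) + (1+βγ) f(s_i x) + αγ ∑_{j=1}^{a_i(x)} f(s_i x + j a_i^∨ + v_{i+1}) + (αδ+βγ) ∑_{j=1}^{a_i(x)−1} f(s_i x + j a_i^∨) + βδ ∑_{j=0}^{a_i(x)−1} f(s_i x + j a_i^∨ − v_{i+1}), with (T̂_i f)(x) := f(x) when a_i(x) = 0, and the analogous formula with negated signs when a_i(x) < 0 (as in the paper). Then T̂_i satisfies the quadratic relation (T̂_i − 1)(T̂_i + q) = 0 on F, where q = 1 + βγ − αδ. -/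
/-!
`T̂_i f` at `x` only involves the values `h u v` of `f` at the points of the `(i, i+1)`-plane
through `x` (coordinates `u`, `v` in positions `i`, `i+1`), so it suffices to study the induced
operator `T = That₂` on functions `h : ℤ → ℤ → ℂ`. Indexing the three sums by the first
coordinate of the summand and reading them as signed interval sums, a single formula defines `T`
for all signs of `a - b`, and telescoping gives

* `T h (a, b) + T h (b, a) = h (a, b) + h (b, a)`,
* `T h (a + 1, b - 1) - T h (a, b)` is a combination of eight values of `h` next to `(a, b)`.

Hence the defect `E = T (T h) - (1 - q) T h - q h` is antisymmetric in `(a, b)` and invariant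
under `(a, b) ↦ (a + 1, b - 1)`, which forces `E = 0`.
-/

noncomputable section

open Finset

/-- the operator T̂_i acting on functions f : ℤ^k → ℂ (the index i+1 is denoted j);
`a_i(x) = x_i − x_{i+1}`, `s_i x` swaps the coordinates i and i+1,
`a_i^∨ = v_i − v_{i+1}`. -/
def That {k : ℕ} (α β γ δ : ℂ) (i j : Fin k) (f : (Fin k → ℤ) → ℂ)
    (x : Fin k → ℤ) : ℂ :=
  let s : Fin k → ℤ := x ∘ Equiv.swap i j
  let av : Fin k → ℤ := fun l => if l = i then 1 else if l = j then -1 else 0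
  let vj : Fin k → ℤ := Pi.single j 1
  let n : ℤ := x i - x j
  if 0 < n then
    α * δ * f x + (1 + β * γ) * f s +
      α * γ * ∑ m ∈ Icc 1 n.toNat, f (s + m • av + vj) +
      (α * δ + β * γ) * ∑ m ∈ Icc 1 (n.toNat - 1), f (s + m • av) +
      β * δ * ∑ m ∈ range n.toNat, f (s + m • av - vj)
  else if n = 0 then f x
  else
    -(β * γ) * f x + (1 - α * δ) * f s -
      α * γ * ∑ m ∈ range (-n).toNat, f (s - m • av + vj) -
      (α * δ + β * γ) * ∑ m ∈ Icc 1 ((-n).toNat - 1), f (s - m • av) -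
      β * δ * ∑ m ∈ Icc 1 (-n).toNat, f (s - m • av - vj)

section IntervalSum

variable {M : Type*} [AddCommGroup M] (f : ℤ → M)

def intPrimitive (n : ℤ) : M := ∑ m ∈ Ico 0 n, f m - ∑ m ∈ Ico n 0, f m

lemma intPrimitive_add_one (n : ℤ) : intPrimitive f (n + 1) = intPrimitive f n + f n := by
  rcases le_or_gt 0 n with hn | hn
  · have h : Ico 0 (n + 1) = insert n (Ico 0 n) := by ext; simp; omega
    simp only [intPrimitive, h, sum_insert (show n ∉ Ico 0 n by simp),
      Ico_eq_empty_of_le hn, Ico_eq_empty_of_le (show 0 ≤ n + 1 by omega)]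
    abel
  · have h : Ico n 0 = insert n (Ico (n + 1) 0) := by ext; simp; omega
    simp only [intPrimitive, h, sum_insert (show n ∉ Ico (n + 1) 0 by simp),
      Ico_eq_empty_of_le hn.le, Ico_eq_empty_of_le (show n + 1 ≤ 0 by omega)]
    abel

/-- `∑ m ∈ [p, q], f m`; when `q + 1 < p` it is `-∑ m ∈ [q + 1, p - 1], f m`, which makes it
additive in the endpoints. -/
def intervalSum (p q : ℤ) : M := intPrimitive f (q + 1) - intPrimitive f p

lemma intervalSum_succ_top (p q : ℤ) :
    intervalSum f p (q + 1) = intervalSum f p q + f (q + 1) := by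
  simp only [intervalSum, intPrimitive_add_one]; abel

lemma intervalSum_eq_bot_add_add_top (p q : ℤ) :
    intervalSum f p q = f p + intervalSum f (p + 1) (q - 1) + f q := by
  simp only [intervalSum, sub_add_cancel, intPrimitive_add_one]; abel

lemma intervalSum_eq_intervalSum_succ_bot (p q : ℤ) :
    intervalSum f p q = f p + intervalSum f (p + 1) q := by
  simp only [intervalSum, intPrimitive_add_one]; abel

lemma intervalSum_eq_neg_intervalSum (p q : ℤ) :
    intervalSum f p q = -intervalSum f (q + 1) (p - 1) := by
  simp [intervalSum]

lemma intervalSum_eq_sum_range {p q : ℤ} (n : ℕ) (hq : q = p + n - 1) :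
    intervalSum f p q = ∑ m ∈ range n, f (p + m) := by
  subst hq
  induction n with
  | zero => simp [intervalSum]
  | succ n ih =>
    rw [sum_range_succ, ← ih, Nat.cast_succ, show p + (n + 1) - 1 = p + n - 1 + 1 by ring,
      intervalSum_succ_top, sub_add_cancel]

lemma intervalSum_eq_sum_Icc {p q : ℤ} (n : ℕ) (hq : q = p + n) :
    intervalSum f (p + 1) q = ∑ m ∈ Icc 1 n, f (p + m) := by
  subst hq
  induction n with
  | zero => simp [intervalSum]
  | succ n ih =>
    rw [sum_Icc_succ_top (by omega), ← ih, Nat.cast_succ, ← add_assoc, intervalSum_succ_top]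

lemma intervalSum_eq_sum_range_sub {p q : ℤ} (n : ℕ) (hp : p = q - n + 1) :
    intervalSum f p q = ∑ m ∈ range n, f (q - m) := by
  subst hp
  induction n with
  | zero => simp [intervalSum]
  | succ n ih =>
    rw [sum_range_succ, ← ih, Nat.cast_succ, intervalSum_eq_intervalSum_succ_bot,
      show q - (n + 1) + 1 + 1 = q - n + 1 by ring, add_comm, show q - (n + 1) + 1 = q - n by ring]

lemma intervalSum_eq_sum_Icc_sub {p q : ℤ} (n : ℕ) (hp : p = q - n) :
    intervalSum f p (q - 1) = ∑ m ∈ Icc 1 n, f (q - m) := by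
  subst hp
  induction n with
  | zero => simp [intervalSum]
  | succ n ih =>
    rw [sum_Icc_succ_top (by omega), ← ih, Nat.cast_succ, intervalSum_eq_intervalSum_succ_bot,
      show q - (n + 1) + 1 = q - n by ring, add_comm, sub_add_eq_sub_sub]

end IntervalSum

lemma eq_zero_of_swap_eq_neg_of_add_one_sub_one {M : Type*} [AddCommGroup M]
    [IsAddTorsionFree M] {g : ℤ → ℤ → M} (hswap : ∀ a b, g b a = -g a b)
    (hshift : ∀ a b, g (a + 1) (b - 1) = g a b) (a b : ℤ) : g a b = 0 := by
  have of_le (n : ℕ) : ∀ b, g (b + n) b = 0 := by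
    induction n using Nat.twoStepInduction with
    | zero => intro b; simpa using self_eq_neg.mp (hswap b b)
    | one =>
      intro b
      have h₁ : g (b + 1) b = g b (b + 1) := by simpa using hshift b (b + 1)
      rw [Nat.cast_one, h₁]
      exact self_eq_neg.mp (h₁.symm.trans (hswap b (b + 1)))
    | more n ih _ =>
      intro b
      calc g (b + ↑(n + 2)) b = g (b + 1 + n + 1) (b + 1 - 1) := by push_cast; ring_nf
        _ = 0 := by rw [hshift, ih]
  rcases le_total b a with hba | hab
  · obtain ⟨n, rfl⟩ := Int.exists_add_of_le hba
    exact of_le n b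
  · obtain ⟨n, rfl⟩ := Int.exists_add_of_le hab
    rw [← neg_eq_zero, ← hswap]; exact of_le n a

section Planar

variable {R : Type*} [CommRing R] (α β γ δ : R)

/-- `That` in the coordinates `(a, b) = (x i, x j)`, each sum indexed by the first coordinate `u`
of its summand. -/
def That₂ (h : ℤ → ℤ → R) (a b : ℤ) : R :=
  α * δ * h a b + (1 + β * γ) * h b a +
    α * γ * intervalSum (fun u => h u (a + b + 1 - u)) (b + 1) a +
    (α * δ + β * γ) * intervalSum (fun u => h u (a + b - u)) (b + 1) (a - 1) +
    β * δ * intervalSum (fun u => h u (a + b - 1 - u)) b (a - 1)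

lemma That₂_of_eq (h : ℤ → ℤ → R) {a b : ℤ} (hab : a = b) : That₂ α β γ δ h a b = h a b := by
  subst hab
  simp [That₂, intervalSum, intPrimitive_add_one]; ring

lemma That₂_of_pos (h : ℤ → ℤ → R) {a b : ℤ} (n : ℕ) (hab : a = b + n + 1) :
    That₂ α β γ δ h a b = α * δ * h a b + (1 + β * γ) * h b a +
      α * γ * ∑ m ∈ Icc 1 (n + 1), h (b + m) (a - m + 1) +
      (α * δ + β * γ) * ∑ m ∈ Icc 1 n, h (b + m) (a - m) +
      β * δ * ∑ m ∈ range (n + 1), h (b + m) (a - m - 1) := by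
  rw [That₂, intervalSum_eq_sum_Icc _ (n + 1) (by push_cast; omega),
    intervalSum_eq_sum_Icc _ n (by omega),
    intervalSum_eq_sum_range _ (n + 1) (by push_cast; omega)]
  have e₁ (m : ℤ) : a + b + 1 - (b + m) = a - m + 1 := by ring
  have e₂ (m : ℤ) : a + b - (b + m) = a - m := by ring
  have e₃ (m : ℤ) : a + b - 1 - (b + m) = a - m - 1 := by ring
  simp only [e₁, e₂, e₃]

lemma That₂_of_neg (h : ℤ → ℤ → R) {a b : ℤ} (n : ℕ) (hab : b = a + n + 1) :
    That₂ α β γ δ h a b = -(β * γ) * h a b + (1 - α * δ) * h b a -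
      α * γ * ∑ m ∈ range (n + 1), h (b - m) (a + m + 1) -
      (α * δ + β * γ) * ∑ m ∈ Icc 1 n, h (b - m) (a + m) -
      β * δ * ∑ m ∈ Icc 1 (n + 1), h (b - m) (a + m - 1) := by
  rw [That₂, intervalSum_eq_neg_intervalSum _ (b + 1), intervalSum_eq_neg_intervalSum _ (b + 1),
    intervalSum_eq_neg_intervalSum _ b]
  simp only [add_sub_cancel_right, sub_add_cancel]
  rw [intervalSum_eq_bot_add_add_top _ a b,
    intervalSum_eq_sum_range_sub _ (n + 1) (by push_cast; omega),
    intervalSum_eq_sum_Icc_sub _ n (by omega),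
    intervalSum_eq_sum_Icc_sub _ (n + 1) (by push_cast; omega)]
  have e₁ (m : ℤ) : a + b + 1 - (b - m) = a + m + 1 := by ring
  have e₂ (m : ℤ) : a + b - (b - m) = a + m := by ring
  have e₃ (m : ℤ) : a + b - 1 - (b - m) = a + m - 1 := by ring
  simp only [e₁, e₂, e₃, add_sub_cancel_left, add_sub_cancel_right]
  ring

lemma That₂_add_That₂_swap (h : ℤ → ℤ → R) (a b : ℤ) :
    That₂ α β γ δ h a b + That₂ α β γ δ h b a = h a b + h b a := by
  have hba : b + a = a + b := add_comm b a
  simp only [That₂, hba]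
  rw [intervalSum_eq_neg_intervalSum _ (a + 1) b,
    intervalSum_eq_neg_intervalSum _ (a + 1) (b - 1), intervalSum_eq_neg_intervalSum _ a]
  simp only [add_sub_cancel_right, sub_add_cancel]
  rw [intervalSum_eq_bot_add_add_top _ b a]
  simp only [add_sub_cancel_left, add_sub_cancel_right]
  ring

lemma That₂_add_one_sub_one (h : ℤ → ℤ → R) (a b : ℤ) :
    That₂ α β γ δ h (a + 1) (b - 1) = That₂ α β γ δ h a b +
      α * δ * (h (a + 1) (b - 1) - h a b) + (1 + β * γ) * (h (b - 1) (a + 1) - h b a) +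
      α * γ * (h b (a + 1) + h (a + 1) b) + (α * δ + β * γ) * (h b a + h a b) +
      β * δ * (h (b - 1) a + h a (b - 1)) := by
  have hs : a + 1 + (b - 1) = a + b := by ring
  simp only [That₂, hs, sub_add_cancel, add_sub_cancel_right]
  rw [intervalSum_eq_bot_add_add_top _ b (a + 1), intervalSum_eq_bot_add_add_top _ b a,
    intervalSum_eq_bot_add_add_top _ (b - 1) a]
  simp only [add_sub_cancel_right, sub_add_cancel]
  ring_nf

lemma That₂_quadratic [IsAddTorsionFree R] (h : ℤ → ℤ → R) (a b : ℤ) :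
    That₂ α β γ δ (That₂ α β γ δ h) a b - (α * δ - β * γ) * That₂ α β γ δ h a b -
      (1 + β * γ - α * δ) * h a b = 0 := by
  refine eq_zero_of_swap_eq_neg_of_add_one_sub_one
    (g := fun a b => That₂ α β γ δ (That₂ α β γ δ h) a b -
      (α * δ - β * γ) * That₂ α β γ δ h a b - (1 + β * γ - α * δ) * h a b)
    (fun a b => ?_) (fun a b => ?_) a b
  · have w₁ := That₂_add_That₂_swap α β γ δ (That₂ α β γ δ h) a b
    have w₀ := That₂_add_That₂_swap α β γ δ h a b
    linear_combination w₁ + (1 - (α * δ - β * γ)) * w₀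
  · have s₁ := That₂_add_one_sub_one α β γ δ (That₂ α β γ δ h) a b
    have s₀ := That₂_add_one_sub_one α β γ δ h a b
    have w₁ := That₂_add_That₂_swap α β γ δ h (a + 1) (b - 1)
    have w₀ := That₂_add_That₂_swap α β γ δ h a b
    have w₂ := That₂_add_That₂_swap α β γ δ h b (a + 1)
    have w₃ := That₂_add_That₂_swap α β γ δ h (b - 1) a
    linear_combination s₁ - s₀ + (1 + β * γ) * (w₁ - w₀) + α * γ * w₂ + (α * δ + β * γ) * w₀ +
      β * δ * w₃

end Planar

open Function

section Plane

variable {k : ℕ} {i j : Fin k} (x : Fin k → ℤ)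

lemma comp_swap_eq_update_update : x ∘ Equiv.swap i j = update (update x i (x j)) j (x i) := by
  ext l; simp only [comp_apply, update_apply, Equiv.swap_apply_def]; split_ifs <;> simp_all

lemma update_update_add_nsmul (hij : i ≠ j) (u v : ℤ) (m : ℕ) :
    update (update x i u) j v +
        m • (fun l => if l = i then (1 : ℤ) else if l = j then -1 else 0) =
      update (update x i (u + m)) j (v - m) := by
  ext l; simp only [Pi.add_apply, Pi.smul_apply, update_apply]; split_ifs <;> simp_all; ring

lemma update_update_sub_nsmul (hij : i ≠ j) (u v : ℤ) (m : ℕ) :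
    update (update x i u) j v -
        m • (fun l => if l = i then (1 : ℤ) else if l = j then -1 else 0) =
      update (update x i (u - m)) j (v + m) := by
  ext l; simp only [Pi.sub_apply, Pi.smul_apply, update_apply]; split_ifs <;> simp_all

lemma update_update_add_single (u v : ℤ) :
    update (update x i u) j v + Pi.single j 1 = update (update x i u) j (v + 1) := by
  ext l; simp only [Pi.add_apply, Pi.single_apply, update_apply]; split_ifs <;> simp_all

lemma update_update_sub_single (u v : ℤ) :
    update (update x i u) j v - Pi.single j 1 = update (update x i u) j (v - 1) := by
  ext l; simp only [Pi.sub_apply, Pi.single_apply, update_apply]; split_ifs <;> simp_all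

end Plane

lemma That_eq_That₂ {k : ℕ} (α β γ δ : ℂ) {i j : Fin k} (hij : i ≠ j) (f : (Fin k → ℤ) → ℂ)
    (x : Fin k → ℤ) :
    That α β γ δ i j f x =
      That₂ α β γ δ (fun u v => f (update (update x i u) j v)) (x i) (x j) := by
  have hx : update (update x i (x i)) j (x j) = x := by simp
  simp only [That]
  rw [comp_swap_eq_update_update]
  simp only [update_update_add_nsmul x hij, update_update_sub_nsmul x hij,
    update_update_add_single, update_update_sub_single]
  rcases lt_trichotomy (x i - x j) 0 with hneg | hzero | hpos
  · obtain ⟨n, hn⟩ : ∃ n : ℕ, x j = x i + n + 1 := ⟨(x j - x i - 1).toNat, by omega⟩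
    rw [if_neg (by omega), if_neg (by omega), show (-(x i - x j)).toNat = n + 1 by omega,
      That₂_of_neg α β γ δ _ n hn, hx]
    simp
  · rw [if_neg (by omega), if_pos hzero, That₂_of_eq α β γ δ _ (by omega), hx]
  · obtain ⟨n, hn⟩ : ∃ n : ℕ, x i = x j + n + 1 := ⟨(x i - x j - 1).toNat, by omega⟩
    rw [if_pos hpos, show (x i - x j).toNat = n + 1 by omega, That₂_of_pos α β γ δ _ n hn, hx]
    simp

/-- the operator T̂_i satisfies the quadratic relation
(T̂_i − 1)(T̂_i + q) = 0, i.e. T̂_i² = (1−q)T̂_i + q, with q = 1 + βγ − αδ. -/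
theorem stmt17 {k : ℕ} (α β γ δ : ℂ) (i j : Fin k) (hij : (j : ℕ) = (i : ℕ) + 1)
    (f : (Fin k → ℤ) → ℂ) (x : Fin k → ℤ) :
    That α β γ δ i j (That α β γ δ i j f) x -
        (1 - (1 + β * γ - α * δ)) * That α β γ δ i j f x -
        (1 + β * γ - α * δ) * f x = 0 := by
  have hne : i ≠ j := fun h => by simp [h] at hij
  have hrestrict : (fun u v => That α β γ δ i j f (update (update x i u) j v)) =
      That₂ α β γ δ (fun u v => f (update (update x i u) j v)) := by
    ext u v
    rw [That_eq_That₂ α β γ δ hne]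
    simp [hne, update_comm hne.symm]
  rw [That_eq_That₂ α β γ δ hne, hrestrict, That_eq_That₂ α β γ δ hne]
  have := That₂_quadratic α β γ δ (fun u v => f (update (update x i u) j v)) (x i) (x j)
  simp only [update_eq_self] at this
  linear_combination this

end
end
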